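/- Under the assumptions of the Piyavskii–Shubert analysis with α ∈ [0, ε/9] and assuming the packing bound 𝒩(𝒳_r, r/(2L₀)) ≤ C*(ε₀/r)^{d*} for all r ∈ (0, ε₀], if the number of queries n satisfies n ≥ 1 + C*(1 + 28(L₁/L₀)·1_{L₁≠L₀ ∨ α≠0})^d · [ log₂(ε₀/ε) + log₂(18/7) if d* = 0, or ((18/7)^{d*}(ε₀/ε)^{d*} − 1)/(2^{d*} − 1) if d* > 0 ], then the simple regret of the Piyavskii–Shubert algorithm satisfies r_n ≤ ε. -/

import Mathlib

open scoped Classical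

/-- The `r`-packing number of `A`. -/
noncomputable def packingNum {E : Type*} [NormedAddCommGroup E] (A : Set E) (r : ℝ) : ℕ :=
  sSup {k : ℕ | ∃ x : Fin k → E, (∀ i, x i ∈ A) ∧ ∀ i j, i ≠ j → r < ‖x i - x j‖}

/-- The Piyavskii–Shubert proxy function after `k` observations. -/
noncomputable def fhat {E : Type*} [NormedAddCommGroup E]
    (f : E → ℝ) (x : ℕ → E) (ξ : ℕ → ℝ) (L₁ α : ℝ) (k : ℕ) (y : E) : ℝ :=
  ⨅ i : (Finset.Icc 1 k : Finset ℕ), (f (x i) + ξ i + L₁ * ‖x i - y‖ + α)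


open Metric MeasureTheory
open scoped ENNReal

/-- Volume argument: `> s`-separated points inside a closed ball of radius `t`
in a `d`-dimensional normed space number at most `((t+s/2)/(s/2))^d`. -/
lemma sep_card_le_vol {E : Type*} [NormedAddCommGroup E] [NormedSpace ℝ E]
    [FiniteDimensional ℝ E] (d : ℕ) (hd : Module.finrank ℝ E = d)
    (z : E) (t s : ℝ) (ht : 0 ≤ t) (hs : 0 < s)
    (m : ℕ) (y : Fin m → E) (hy : ∀ i, y i ∈ closedBall z t)
    (hsep : ∀ i j, i ≠ j → s < ‖y i - y j‖) :
    (m : ℝ) ≤ ((t + s / 2) / (s / 2)) ^ d := by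
  borelize E
  set μ : Measure E := (Module.finBasis ℝ E).addHaar with hμ
  have hs2 : 0 < s / 2 := by linarith
  have hdisj : Pairwise (Function.onFun Disjoint fun i => ball (y i) (s / 2)) := by
    intro i j hij
    refine Metric.ball_disjoint_ball ?_
    rw [dist_eq_norm]
    have := hsep i j hij
    linarith
  have hsum : μ (⋃ i, ball (y i) (s / 2)) = ∑ i : Fin m, μ (ball (y i) (s / 2)) := by
    rw [measure_iUnion hdisj fun i => measurableSet_ball, tsum_fintype]
  have hsub : (⋃ i, ball (y i) (s / 2)) ⊆ ball z (t + s / 2) := by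
    refine Set.iUnion_subset fun i => ?_
    refine Metric.ball_subset_ball' ?_
    have := hy i
    rw [mem_closedBall] at this
    linarith
  have hball : ∀ w : E, μ (ball w (s / 2)) = ENNReal.ofReal ((s/2) ^ d) * μ (ball 0 1) := by
    intro w
    rw [Measure.addHaar_ball_of_pos μ w hs2, hd]
  have hballt : μ (ball z (t + s / 2)) = ENNReal.ofReal ((t + s/2) ^ d) * μ (ball 0 1) := by
    rw [Measure.addHaar_ball_of_pos μ z (by linarith), hd]
  have hle : (m : ℝ≥0∞) * (ENNReal.ofReal ((s/2) ^ d) * μ (ball 0 1))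
      ≤ ENNReal.ofReal ((t + s/2) ^ d) * μ (ball 0 1) := by
    calc (m : ℝ≥0∞) * (ENNReal.ofReal ((s/2) ^ d) * μ (ball 0 1))
        = ∑ i : Fin m, μ (ball (y i) (s / 2)) := by
          simp [hball, Finset.sum_const, nsmul_eq_mul]
      _ = μ (⋃ i, ball (y i) (s / 2)) := hsum.symm
      _ ≤ μ (ball z (t + s / 2)) := measure_mono hsub
      _ = _ := hballt
  have hpos : μ (ball (0:E) 1) ≠ 0 := (measure_ball_pos μ 0 one_pos).ne'
  have hfin : μ (ball (0:E) 1) ≠ ⊤ := measure_ball_lt_top.ne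
  rw [← mul_assoc] at hle
  rw [ENNReal.mul_le_mul_iff_left hpos hfin] at hle
  have hle2 : (m : ℝ) * ((s/2) ^ d) ≤ (t + s/2) ^ d := by
    have h1 : ((m : ℝ≥0∞) * ENNReal.ofReal ((s/2) ^ d)) = ENNReal.ofReal ((m:ℝ) * (s/2)^d) := by
      rw [ENNReal.ofReal_mul (by positivity), ENNReal.ofReal_natCast]
    rw [h1] at hle
    exact (ENNReal.ofReal_le_ofReal_iff (by positivity)).mp hle
  rw [div_pow]
  rw [le_div_iff₀ (by positivity)]
  exact hle2

lemma exists_dyadic {x : ℝ} (hx : 1 < x) : ∃ j : ℕ, (2:ℝ)^j < x ∧ x ≤ 2^(j+1) := by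
  classical
  set S : Set ℕ := {j : ℕ | (2:ℝ)^j < x} with hS
  have h0 : 0 ∈ S := by simpa [hS] using hx
  obtain ⟨N, hN⟩ := pow_unbounded_of_one_lt x (by norm_num : (1:ℝ) < 2)
  have hbdd : BddAbove S := by
    refine ⟨N, fun j hj => ?_⟩
    by_contra hc
    push_neg at hc
    have : (2:ℝ)^N ≤ 2^j := pow_le_pow_right₀ (by norm_num) hc.le
    have : (2:ℝ)^j < 2^j := lt_of_lt_of_le (lt_trans hj hN) this
    exact lt_irrefl _ this
  have hmem : sSup S ∈ S := Nat.sSup_mem ⟨0, h0⟩ hbdd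
  refine ⟨sSup S, hmem, ?_⟩
  by_contra hc
  push_neg at hc
  have : sSup S + 1 ∈ S := hc
  have := le_csSup hbdd this
  omega

/-- The set whose sup is the packing number is bounded above when `A` is bounded. -/
lemma packing_bddAbove {E : Type*} [NormedAddCommGroup E] [NormedSpace ℝ E]
    [FiniteDimensional ℝ E] (d : ℕ) (hd : Module.finrank ℝ E = d)
    (A : Set E) (z : E) (ρ : ℝ) (hρ : 0 ≤ ρ) (hA : A ⊆ closedBall z ρ)
    (s : ℝ) (hs : 0 < s) :
    BddAbove {k : ℕ | ∃ x : Fin k → E, (∀ i, x i ∈ A) ∧ ∀ i j, i ≠ j → s < ‖x i - x j‖} := by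
  refine ⟨⌊((ρ + s / 2) / (s / 2)) ^ d⌋₊, fun k hk => ?_⟩
  obtain ⟨y, hy, hsep⟩ := hk
  have := sep_card_le_vol d hd z ρ s hρ hs k y (fun i => hA (hy i)) hsep
  exact Nat.le_floor this

lemma packingNum_witness {E : Type*} [NormedAddCommGroup E] (A : Set E) (s : ℝ)
    (hbdd : BddAbove {k : ℕ | ∃ x : Fin k → E, (∀ i, x i ∈ A) ∧ ∀ i j, i ≠ j → s < ‖x i - x j‖}) :
    ∃ z : Fin (packingNum A s) → E, (∀ i, z i ∈ A) ∧
      (∀ i j, i ≠ j → s < ‖z i - z j‖) ∧ ∀ w ∈ A, ∃ i, ‖w - z i‖ ≤ s := by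
  classical
  set S := {k : ℕ | ∃ x : Fin k → E, (∀ i, x i ∈ A) ∧ ∀ i j, i ≠ j → s < ‖x i - x j‖} with hS
  have h0 : 0 ∈ S := ⟨fun i => i.elim0, fun i => i.elim0, fun i => i.elim0⟩
  have hmem : packingNum A s ∈ S := Nat.sSup_mem ⟨0, h0⟩ hbdd
  obtain ⟨z, hzA, hzsep⟩ := hmem
  refine ⟨z, hzA, hzsep, fun w hw => ?_⟩
  by_contra hc
  push_neg at hc
  have hnew : packingNum A s + 1 ∈ S := by
    refine ⟨fun i => if h : (i : ℕ) < packingNum A s then z ⟨i, h⟩ else w,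
      fun i => ?_, fun i j hij => ?_⟩
    · by_cases h : (i : ℕ) < packingNum A s
      · simpa [h] using hzA ⟨i, h⟩
      · simpa [h] using hw
    · by_cases hi : (i : ℕ) < packingNum A s <;> by_cases hj : (j : ℕ) < packingNum A s
      · have hne : (⟨i, hi⟩ : Fin (packingNum A s)) ≠ ⟨j, hj⟩ := by
          intro h
          exact hij (Fin.ext (by simpa using congrArg Fin.val h))
        simp only [dif_pos hi, dif_pos hj]
        exact hzsep _ _ hne
      · have h2 := hc ⟨i, hi⟩
        rw [norm_sub_rev] at h2
        simp only [dif_pos hi, dif_neg hj]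
        exact h2
      · have h2 := hc ⟨j, hj⟩
        simp only [dif_neg hi, dif_pos hj]
        exact h2
      · exfalso
        apply hij
        have hi' : (i : ℕ) = packingNum A s := by omega
        have hj' : (j : ℕ) = packingNum A s := by omega
        exact Fin.ext (hi'.trans hj'.symm)
  have h4 : packingNum A s + 1 ≤ packingNum A s := le_csSup hbdd hnew
  omega

lemma fhat_le {E : Type*} [NormedAddCommGroup E]
    (f : E → ℝ) (x : ℕ → E) (ξ : ℕ → ℝ) (L₁ α : ℝ) (k : ℕ) (y : E)
    (i : ℕ) (hi : i ∈ Finset.Icc 1 k) :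
    fhat f x ξ L₁ α k y ≤ f (x i) + ξ i + L₁ * ‖x i - y‖ + α :=
  ciInf_le (Set.Finite.bddBelow (Set.finite_range _)) (⟨i, hi⟩ : (Finset.Icc 1 k : Finset ℕ))

lemma le_fhat {E : Type*} [NormedAddCommGroup E]
    (f : E → ℝ) (x : ℕ → E) (ξ : ℕ → ℝ) (L₁ α : ℝ) (k : ℕ) (hk : 1 ≤ k) (y : E)
    (a : ℝ) (h : ∀ i ∈ Finset.Icc 1 k, a ≤ f (x i) + ξ i + L₁ * ‖x i - y‖ + α) :
    a ≤ fhat f x ξ L₁ α k y := by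
  haveI : Nonempty ((Finset.Icc 1 k : Finset ℕ) : Type) :=
    ⟨⟨1, Finset.mem_Icc.mpr ⟨le_refl 1, hk⟩⟩⟩
  exact le_ciInf fun i => h i i.2

set_option maxHeartbeats 1600000 in
/-- Corollary: sample complexity of the Piyavskii–Shubert algorithm in terms of the
near-optimality constants `(C*, d*)`: if `n ≥ n̄` then the simple regret is at most `ε`. -/
theorem piyavskii_sample_complexity_near_opt_dim
    {E : Type*} [NormedAddCommGroup E] [NormedSpace ℝ E] [FiniteDimensional ℝ E]
    (d : ℕ) (hd : Module.finrank ℝ E = d)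
    (D : Set E) (hD : IsCompact D)
    (f : E → ℝ) (xstar : E) (hxstar : xstar ∈ D)
    (hmax : ∀ z ∈ D, f z ≤ f xstar)
    (L₀ L₁ : ℝ) (hL₀ : 0 < L₀) (hL₁ : L₀ ≤ L₁)
    (hlip : ∀ z ∈ D, f xstar - L₀ * ‖xstar - z‖ ≤ f z)
    (ε₀ : ℝ) (hε₀ : ε₀ = L₀ * Metric.diam D)
    (ε α : ℝ) (hε : ε ∈ Set.Ioo 0 ε₀) (hα : 0 ≤ α) (hαε : α ≤ ε / 9)
    (Cstar dstar : ℝ) (hC : 0 ≤ Cstar) (hds0 : 0 ≤ dstar) (hdsd : dstar ≤ d)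
    (hpack : ∀ r : ℝ, 0 < r → r ≤ ε₀ →
      (packingNum {z | z ∈ D ∧ f xstar - r ≤ f z} (r / (2 * L₀)) : ℝ)
        ≤ Cstar * (ε₀ / r) ^ dstar)
    (n : ℕ) (x : ℕ → E) (ξ : ℕ → ℝ)
    (hx : ∀ k, x k ∈ D) (hξ : ∀ k, |ξ k| ≤ α)
    (hsel : ∀ k, 1 ≤ k → k < n →
      sSup ((fun y => fhat f x ξ L₁ α k y) '' D) - α ≤ fhat f x ξ L₁ α k (x (k + 1)))
    (istar : ℕ) (histar : istar ∈ Finset.Icc 1 n)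
    (hargmax : ∀ i ∈ Finset.Icc 1 n, f (x i) + ξ i ≤ f (x istar) + ξ istar)
    (hn : 1 + Cstar * (1 + 28 * (L₁ / L₀) * (if L₁ ≠ L₀ ∨ α ≠ 0 then 1 else 0)) ^ d *
        (if dstar = 0 then Real.logb 2 (ε₀ / ε) + Real.logb 2 (18 / 7)
         else ((18 / 7 : ℝ) ^ dstar * (ε₀ / ε) ^ dstar - 1) / (2 ^ dstar - 1))
      ≤ (n : ℝ)) :
    f xstar - f (x istar) ≤ ε := by
  classical
  by_contra hcon
  push_neg at hcon
  obtain ⟨hεpos, hεlt⟩ := hε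
  have hε₀pos : 0 < ε₀ := lt_trans hεpos hεlt
  have hL₁pos : 0 < L₁ := lt_of_lt_of_le hL₀ hL₁
  set c : ℝ := 7 * ε / 9 with hcdef
  have hcpos : 0 < c := by positivity
  have hcε : c < ε := by rw [hcdef]; linarith
  set Δ : ℕ → ℝ := fun i => f xstar - f (x i) with hΔdef
  -- (A) upper bound on gaps
  have hΔub : ∀ i, Δ i ≤ ε₀ := by
    intro i
    have h1 := hlip (x i) (hx i)
    have h2 : ‖xstar - x i‖ ≤ Metric.diam D := by
      rw [← dist_eq_norm]
      exact Metric.dist_le_diam_of_mem hD.isBounded hxstar (hx i)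
    have h3 : L₀ * ‖xstar - x i‖ ≤ L₀ * Metric.diam D :=
      mul_le_mul_of_nonneg_left h2 hL₀.le
    simp only [hΔdef]
    rw [hε₀]
    linarith
  -- (B) lower bound on gaps of queried points
  have hΔlb : ∀ i ∈ Finset.Icc 1 n, c < Δ i := by
    intro i hi
    have h1 := hargmax i hi
    have h2 := abs_le.mp (hξ i)
    have h3 := abs_le.mp (hξ istar)
    simp only [hΔdef, hcdef]
    linarith
  -- (C) separation of queried points
  have hsepkey : ∀ i m, 1 ≤ i → i < m → m ≤ n → Δ i - 3 * α ≤ L₁ * ‖x i - x m‖ := by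
    intro i m h1i him hmn
    set k := m - 1 with hk
    have hk1 : 1 ≤ k := by omega
    have hkn : k < n := by omega
    have hm : m = k + 1 := by omega
    have hub : BddAbove ((fun y => fhat f x ξ L₁ α k y) '' D) := by
      refine ⟨f (x 1) + ξ 1 + L₁ * Metric.diam D + α, ?_⟩
      rintro _ ⟨y, hy, rfl⟩
      have h2 : fhat f x ξ L₁ α k y ≤ f (x 1) + ξ 1 + L₁ * ‖x 1 - y‖ + α :=
        fhat_le f x ξ L₁ α k y 1 (Finset.mem_Icc.mpr ⟨le_refl 1, hk1⟩)
      have h3 : ‖x 1 - y‖ ≤ Metric.diam D := by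
        rw [← dist_eq_norm]; exact Metric.dist_le_diam_of_mem hD.isBounded (hx 1) hy
      have h4 : L₁ * ‖x 1 - y‖ ≤ L₁ * Metric.diam D := mul_le_mul_of_nonneg_left h3 hL₁pos.le
      linarith
    have hlow : f xstar ≤ fhat f x ξ L₁ α k xstar := by
      refine le_fhat f x ξ L₁ α k hk1 xstar _ fun i' hi' => ?_
      have h2 := hlip (x i') (hx i')
      have h3 : ‖xstar - x i'‖ = ‖x i' - xstar‖ := norm_sub_rev _ _
      have h4 : L₀ * ‖x i' - xstar‖ ≤ L₁ * ‖x i' - xstar‖ :=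
        mul_le_mul_of_nonneg_right hL₁ (norm_nonneg _)
      have h5 := (abs_le.mp (hξ i')).1
      rw [h3] at h2
      linarith
    have hxm : f xstar - α ≤ fhat f x ξ L₁ α k (x m) := by
      have h6 := hsel k hk1 hkn
      rw [← hm] at h6
      have h7 : fhat f x ξ L₁ α k xstar ≤ sSup ((fun y => fhat f x ξ L₁ α k y) '' D) :=
        le_csSup hub ⟨xstar, hxstar, rfl⟩
      linarith
    have h8 : fhat f x ξ L₁ α k (x m) ≤ f (x i) + ξ i + L₁ * ‖x i - x m‖ + α :=
      fhat_le f x ξ L₁ α k (x m) i (Finset.mem_Icc.mpr ⟨h1i, by omega⟩)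
    have h9 := (abs_le.mp (hξ i)).2
    simp only [hΔdef]
    linarith
  -- (D) bucket function
  have hbex : ∀ i, ∃ j : ℕ, i ∈ Finset.Icc 1 n → c * 2 ^ j < Δ i ∧ Δ i ≤ c * 2 ^ (j + 1) := by
    intro i
    by_cases hi : i ∈ Finset.Icc 1 n
    · have h1 : 1 < Δ i / c := (one_lt_div hcpos).mpr (hΔlb i hi)
      obtain ⟨j, hj1, hj2⟩ := exists_dyadic h1
      refine ⟨j, fun _ => ⟨?_, ?_⟩⟩
      · rw [show c * 2 ^ j = 2 ^ j * c from mul_comm _ _]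
        exact (lt_div_iff₀ hcpos).mp hj1
      · rw [show c * 2 ^ (j + 1) = 2 ^ (j + 1) * c from mul_comm _ _]
        exact (div_le_iff₀ hcpos).mp hj2
    · exact ⟨0, fun h => absurd h hi⟩
  choose bkt hbkt using hbex
  -- (E) dyadic scale of ε₀/c
  have hR : 1 < ε₀ / c := (one_lt_div hcpos).mpr (lt_trans hcε hεlt)
  obtain ⟨J, hJ1, hJ2⟩ := exists_dyadic hR
  -- (F) buckets fit in range (J+1)
  have hmap : ∀ i ∈ Finset.Icc 1 n, bkt i ∈ Finset.range (J + 1) := by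
    intro i hi
    obtain ⟨hb1, hb2⟩ := hbkt i hi
    have h1 : (2:ℝ) ^ (bkt i) < ε₀ / c := by
      rw [lt_div_iff₀ hcpos]
      calc (2:ℝ) ^ (bkt i) * c = c * 2 ^ (bkt i) := mul_comm _ _
        _ < Δ i := hb1
        _ ≤ ε₀ := hΔub i
    have h2 : (2:ℝ) ^ (bkt i) < 2 ^ (J + 1) := lt_of_lt_of_le h1 hJ2
    have h3 : bkt i < J + 1 := by
      by_contra hc2
      push_neg at hc2
      have := pow_le_pow_right₀ (by norm_num : (1:ℝ) ≤ 2) hc2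
      linarith
    exact Finset.mem_range.mpr h3
  -- abbreviation for the dimensional factor
  set F : ℝ := (1 + 28 * (L₁ / L₀) * (if L₁ ≠ L₀ ∨ α ≠ 0 then 1 else 0)) ^ d with hFdef
  have hF1 : 1 ≤ F := by
    rw [hFdef]
    have h1 : (0:ℝ) ≤ 28 * (L₁ / L₀) * (if L₁ ≠ L₀ ∨ α ≠ 0 then 1 else 0) := by
      have h0 : (0:ℝ) ≤ (if L₁ ≠ L₀ ∨ α ≠ 0 then (1:ℝ) else 0) := by split <;> norm_num
      have h2 : (0:ℝ) ≤ L₁ / L₀ := le_of_lt (div_pos hL₁pos hL₀)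
      positivity
    have h2 := pow_le_pow_left₀ (by norm_num : (0:ℝ) ≤ 1)
      (by linarith : (1:ℝ) ≤ 1 + 28 * (L₁ / L₀) * (if L₁ ≠ L₀ ∨ α ≠ 0 then 1 else 0)) d
    simpa using h2
  have hF0 : 0 ≤ F := le_trans zero_le_one hF1
  -- (H) per-bucket cardinality bound
  have hbucket : ∀ j ∈ Finset.range (J + 1),
      (((Finset.Icc 1 n).filter (fun i => bkt i = j)).card : ℝ)
        ≤ Cstar * F * ((ε₀ / c) / 2 ^ j) ^ dstar := by
    intro j _
    set B := (Finset.Icc 1 n).filter (fun i => bkt i = j) with hB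
    rcases Finset.eq_empty_or_nonempty B with hBe | hBne
    · rw [hBe]
      simp only [Finset.card_empty, Nat.cast_zero]
      exact mul_nonneg (mul_nonneg hC hF0) (Real.rpow_nonneg (by positivity) _)
    · set M := B.card with hM
      set r : ℝ := min (c * 2 ^ (j + 1)) ε₀ with hr
      have hrpos : 0 < r := lt_min (by positivity) hε₀pos
      have hrε₀ : r ≤ ε₀ := min_le_right _ _
      have hrle : r ≤ c * 2 ^ (j + 1) := min_le_left _ _
      set A : Set E := {z | z ∈ D ∧ f xstar - r ≤ f z} with hA
      have hBmem : ∀ a ∈ B, a ∈ Finset.Icc 1 n ∧ bkt a = j := fun a ha => Finset.mem_filter.mp ha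
      set e := B.orderIsoOfFin hM.symm with he
      have heB : ∀ i : Fin M, ((e i : ℕ)) ∈ B := fun i => (e i).2
      have hyA : ∀ i : Fin M, x (e i) ∈ A := by
        intro i
        obtain ⟨hIcc, hbj⟩ := hBmem _ (heB i)
        refine ⟨hx _, ?_⟩
        obtain ⟨hb1, hb2⟩ := hbkt _ hIcc
        rw [hbj] at hb2
        have h3 := hΔub ((e i : ℕ))
        have h4 : Δ ((e i : ℕ)) ≤ r := le_min hb2 h3
        simp only [hΔdef] at h4
        linarith
      have heinj : ∀ i i' : Fin M, i ≠ i' → ((e i : ℕ)) ≠ ((e i' : ℕ)) := by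
        intro i i' hii h
        exact hii (e.injective (Subtype.ext h))
      -- two-scale pairwise separation
      have h2j : (1:ℝ) ≤ 2 ^ j := by
        have := pow_le_pow_left₀ (by norm_num : (0:ℝ) ≤ 1) (by norm_num : (1:ℝ) ≤ 2) j
        simpa using this
      have hcore : ∀ a b : ℕ, a ∈ B → b ∈ B → a < b →
          4 * (c * 2 ^ j) / (7 * L₁) < ‖x a - x b‖ := by
        intro a b haB hbB hab
        obtain ⟨haI, haj⟩ := hBmem a haB
        obtain ⟨hbI, _⟩ := hBmem b hbB
        have h5 := hsepkey a b (Finset.mem_Icc.mp haI).1 hab (Finset.mem_Icc.mp hbI).2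
        obtain ⟨ha1, _⟩ := hbkt a haI
        rw [haj] at ha1
        have h7 : 3 * α ≤ 3 * (c * 2 ^ j) / 7 := by
          rw [hcdef]
          nlinarith [hαε, hεpos, h2j]
        rw [div_lt_iff₀ (by positivity)]
        nlinarith [h5, ha1, h7]
      have hysep : ∀ i i' : Fin M, i ≠ i' →
          4 * (c * 2 ^ j) / (7 * L₁) < ‖x (e i) - x (e i')‖ := by
        intro i i' hii
        rcases lt_or_gt_of_ne (heinj i i' hii) with h | h
        · exact hcore _ _ (heB i) (heB i') h
        · rw [norm_sub_rev]; exact hcore _ _ (heB i') (heB i) h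
      -- ratio bound (uses nonemptiness)
      have hcj : c * 2 ^ j < ε₀ := by
        obtain ⟨a, haB⟩ := hBne
        obtain ⟨haI, haj⟩ := hBmem a haB
        obtain ⟨ha1, _⟩ := hbkt a haI
        rw [haj] at ha1
        exact lt_of_lt_of_le ha1 (hΔub a)
      have hc2jr : c * 2 ^ j ≤ r := by
        refine le_min ?_ hcj.le
        have h2j2 : (2:ℝ) ^ j ≤ 2 ^ (j + 1) := by rw [pow_succ]; nlinarith [h2j]
        exact mul_le_mul_of_nonneg_left h2j2 hcpos.le
      have hratio : ε₀ / r ≤ (ε₀ / c) / 2 ^ j := by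
        rw [div_div]
        exact div_le_div_of_nonneg_left hε₀pos.le (by positivity) hc2jr
      have hrpow : (ε₀ / r) ^ dstar ≤ ((ε₀ / c) / 2 ^ j) ^ dstar :=
        Real.rpow_le_rpow (by positivity) hratio hds0
      -- boundedness of packings of A
      obtain ⟨ρ₀, hρ₀⟩ := hD.isBounded.subset_closedBall xstar
      have hρ0 : (0:ℝ) ≤ max ρ₀ 0 := le_max_right _ _
      have hρD : D ⊆ Metric.closedBall xstar (max ρ₀ 0) :=
        hρ₀.trans (Metric.closedBall_subset_closedBall (le_max_left _ _))
      have hAsub : A ⊆ Metric.closedBall xstar (max ρ₀ 0) := fun z hz => hρD hz.1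
      have hs2L : 0 < r / (2 * L₀) := by positivity
      have hbddpack : BddAbove {k : ℕ | ∃ y : Fin k → E,
          (∀ i, y i ∈ A) ∧ ∀ i i', i ≠ i' → r / (2 * L₀) < ‖y i - y i'‖} :=
        packing_bddAbove d hd A xstar (max ρ₀ 0) hρ0 hAsub _ hs2L
      have hKbound : ((packingNum A (r / (2 * L₀)) : ℕ) : ℝ) ≤ Cstar * (ε₀ / r) ^ dstar :=
        hpack r hrpos hrε₀
      by_cases hcase : L₁ ≠ L₀ ∨ α ≠ 0
      · -- perturbed case: volume argument
        obtain ⟨zf, hzA, hzsep, hzcov⟩ := packingNum_witness A (r / (2 * L₀)) hbddpack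
        have hgex : ∀ i : Fin M, ∃ k : Fin (packingNum A (r / (2 * L₀))),
            ‖x (e i) - zf k‖ ≤ r / (2 * L₀) := fun i => hzcov _ (hyA i)
        choose g hg using hgex
        have hMsum : M = ∑ k : Fin (packingNum A (r / (2 * L₀))),
            (Finset.univ.filter (fun i : Fin M => g i = k)).card := by
          have h10 := Finset.card_eq_sum_card_fiberwise
            (f := g) (s := Finset.univ) (t := Finset.univ) (fun i _ => Finset.mem_univ _)
          simpa using h10
        have hFval : F = (1 + 28 * (L₁ / L₀)) ^ d := by
          rw [hFdef, if_pos hcase, mul_one]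
        have hfiber : ∀ k : Fin (packingNum A (r / (2 * L₀))),
            ((Finset.univ.filter (fun i : Fin M => g i = k)).card : ℝ) ≤ F := by
          intro k
          have e2 := (Finset.univ.filter (fun i : Fin M => g i = k)).orderIsoOfFin rfl
          have hTk : ∀ i, g (e2 i) = k := fun i => (Finset.mem_filter.mp (e2 i).2).2
          have hcard := sep_card_le_vol d hd (zf k) (r / (2 * L₀)) (4 * (c * 2 ^ j) / (7 * L₁))
            hs2L.le (by positivity) (Finset.univ.filter (fun i : Fin M => g i = k)).card
            (fun i => x (e (e2 i)))
            (fun i => by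
              have h := hg (e2 i)
              rw [hTk i] at h
              exact Metric.mem_closedBall.mpr (by rw [dist_eq_norm]; exact h))
            (fun i i' hii =>
              hysep _ _ (fun h => hii (e2.injective (Subtype.ext h))))
          have hbase : (r / (2 * L₀) + (4 * (c * 2 ^ j) / (7 * L₁)) / 2)
              / ((4 * (c * 2 ^ j) / (7 * L₁)) / 2) ≤ 1 + 28 * (L₁ / L₀) := by
            rw [div_le_iff₀ (by positivity)]
            have ht1 : r / (2 * L₀) ≤ (c * 2 ^ j) / L₀ := by
              rw [div_le_div_iff₀ (by positivity) (by positivity)]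
              rw [pow_succ] at hrle
              nlinarith [hrle, hL₀]
            have hpos8 : (0:ℝ) ≤ (c * 2 ^ j) / L₀ := by positivity
            have expand : (1 + 28 * (L₁ / L₀)) * ((4 * (c * 2 ^ j) / (7 * L₁)) / 2)
                = (4 * (c * 2 ^ j) / (7 * L₁)) / 2 + 8 * ((c * 2 ^ j) / L₀) := by
              field_simp
              ring
            rw [expand]
            linarith [ht1, hpos8]
          have hbound : ((r / (2 * L₀) + (4 * (c * 2 ^ j) / (7 * L₁)) / 2)
              / ((4 * (c * 2 ^ j) / (7 * L₁)) / 2)) ^ d ≤ (1 + 28 * (L₁ / L₀)) ^ d :=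
            pow_le_pow_left₀ (by positivity) hbase d
          rw [hFval]
          exact le_trans hcard hbound
        have hcast := congrArg (Nat.cast (R := ℝ)) hMsum
        push_cast at hcast
        calc (M : ℝ) = ∑ k : Fin (packingNum A (r / (2 * L₀))),
              (((Finset.univ.filter (fun i : Fin M => g i = k)).card : ℕ) : ℝ) := by
              exact_mod_cast hcast
          _ ≤ ∑ _k : Fin (packingNum A (r / (2 * L₀))), F :=
              Finset.sum_le_sum (fun k _ => hfiber k)
          _ = ((packingNum A (r / (2 * L₀)) : ℕ) : ℝ) * F := by
              rw [Finset.sum_const, Finset.card_univ, Fintype.card_fin, nsmul_eq_mul]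
          _ ≤ (Cstar * (ε₀ / r) ^ dstar) * F := mul_le_mul_of_nonneg_right hKbound hF0
          _ ≤ (Cstar * ((ε₀ / c) / 2 ^ j) ^ dstar) * F :=
              mul_le_mul_of_nonneg_right (mul_le_mul_of_nonneg_left hrpow hC) hF0
          _ = Cstar * F * ((ε₀ / c) / 2 ^ j) ^ dstar := by ring
      · -- exact case: L₁ = L₀ and α = 0
        push_neg at hcase
        obtain ⟨hLe, hαe⟩ := hcase
        have hFone : F = 1 := by
          rw [hFdef]
          simp [hLe, hαe]
        have hcore2 : ∀ a b : ℕ, a ∈ B → b ∈ B → a < b → r / (2 * L₀) < ‖x a - x b‖ := by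
          intro a b haB hbB hab
          obtain ⟨haI, haj⟩ := hBmem a haB
          obtain ⟨hbI, _⟩ := hBmem b hbB
          have h5 := hsepkey a b (Finset.mem_Icc.mp haI).1 hab (Finset.mem_Icc.mp hbI).2
          obtain ⟨ha1, _⟩ := hbkt a haI
          rw [haj] at ha1
          rw [hLe, hαe] at h5
          rw [div_lt_iff₀ (by positivity)]
          rw [pow_succ] at hrle
          nlinarith [h5, ha1]
        have hMpack : M ∈ {k : ℕ | ∃ y : Fin k → E,
            (∀ i, y i ∈ A) ∧ ∀ i i', i ≠ i' → r / (2 * L₀) < ‖y i - y i'‖} := by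
          refine ⟨fun i => x (e i), hyA, fun i i' hii => ?_⟩
          rcases lt_or_gt_of_ne (heinj i i' hii) with h | h
          · exact hcore2 _ _ (heB i) (heB i') h
          · rw [norm_sub_rev]; exact hcore2 _ _ (heB i') (heB i) h
        have hMle : M ≤ packingNum A (r / (2 * L₀)) := le_csSup hbddpack hMpack
        calc (M : ℝ) ≤ ((packingNum A (r / (2 * L₀)) : ℕ) : ℝ) := Nat.cast_le.mpr hMle
          _ ≤ Cstar * (ε₀ / r) ^ dstar := hKbound
          _ ≤ Cstar * ((ε₀ / c) / 2 ^ j) ^ dstar := mul_le_mul_of_nonneg_left hrpow hC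
          _ = Cstar * F * ((ε₀ / c) / 2 ^ j) ^ dstar := by rw [hFone]; ring
  -- (G)+(I) total count
  have htotal : (n : ℝ) ≤ Cstar * F * ∑ j ∈ Finset.range (J + 1), ((ε₀ / c) / 2 ^ j) ^ dstar := by
    have h1 : (Finset.Icc 1 n).card
        = ∑ j ∈ Finset.range (J + 1), ((Finset.Icc 1 n).filter (fun i => bkt i = j)).card :=
      Finset.card_eq_sum_card_fiberwise hmap
    have h2 : ((Finset.Icc 1 n).card : ℝ)
        ≤ ∑ j ∈ Finset.range (J + 1), Cstar * F * ((ε₀ / c) / 2 ^ j) ^ dstar := by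
      rw [h1]
      push_cast
      exact Finset.sum_le_sum hbucket
    have h3 : (Finset.Icc 1 n).card = n := by rw [Nat.card_Icc]; omega
    rw [h3, ← Finset.mul_sum] at h2
    exact h2
  -- (J) bound on the sum
  have hsum : ∑ j ∈ Finset.range (J + 1), ((ε₀ / c) / 2 ^ j) ^ dstar
      ≤ (if dstar = 0 then Real.logb 2 (ε₀ / ε) + Real.logb 2 (18 / 7)
         else ((18 / 7 : ℝ) ^ dstar * (ε₀ / ε) ^ dstar - 1) / (2 ^ dstar - 1)) := by
    by_cases hds : dstar = 0
    · rw [if_pos hds, hds]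
      simp only [Real.rpow_zero]
      rw [Finset.sum_const, Finset.card_range, nsmul_eq_mul, mul_one]
      have hJlog : (J : ℝ) < Real.logb 2 (ε₀ / c) := by
        have h1 : Real.logb 2 ((2:ℝ) ^ (J:ℕ)) < Real.logb 2 (ε₀ / c) :=
          Real.logb_lt_logb (by norm_num) (by positivity) hJ1
        rwa [Real.logb_pow, Real.logb_self_eq_one (by norm_num), mul_one] at h1
      have hlogeq : Real.logb 2 (ε₀ / c) + 1 = Real.logb 2 (ε₀ / ε) + Real.logb 2 (18 / 7) := by
        have h1 : ε₀ / c = (ε₀ / ε) * (9 / 7) := by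
          rw [hcdef]; field_simp
        have h2 : (18 / 7 : ℝ) = (9 / 7) * 2 := by norm_num
        rw [h1, h2, Real.logb_mul (by positivity) (by norm_num),
          Real.logb_mul (by norm_num) (by norm_num), Real.logb_self_eq_one (by norm_num)]
        ring
      push_cast
      linarith
    · rw [if_neg hds]
      have hdspos : 0 < dstar := lt_of_le_of_ne hds0 (Ne.symm hds)
      have hq : 1 < (2:ℝ) ^ dstar :=
        (Real.one_lt_rpow_iff_of_pos (by norm_num)).mpr (Or.inl ⟨by norm_num, hdspos⟩)
      have hq1 : (0:ℝ) < 2 ^ dstar - 1 := by linarith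
      have hRpos : 0 < ε₀ / c := lt_trans one_pos hR
      have hterm : ∀ j : ℕ, ((ε₀ / c) / 2 ^ j) ^ dstar
          = ((2 * (ε₀ / c) / 2 ^ j) ^ dstar - (2 * (ε₀ / c) / 2 ^ (j + 1)) ^ dstar)
            / (2 ^ dstar - 1) := by
        intro j
        have hu : 2 * (ε₀ / c) / 2 ^ (j + 1) = (ε₀ / c) / 2 ^ j := by
          rw [pow_succ]; field_simp
        have h2u : 2 * (ε₀ / c) / 2 ^ j = 2 * ((ε₀ / c) / 2 ^ j) := by ring
        rw [hu, h2u, Real.mul_rpow (by norm_num) (by positivity)]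
        rw [eq_div_iff hq1.ne']
        ring
      have htel : ∑ j ∈ Finset.range (J + 1), ((ε₀ / c) / 2 ^ j) ^ dstar
          = ((2 * (ε₀ / c) / 2 ^ 0) ^ dstar - (2 * (ε₀ / c) / 2 ^ (J + 1)) ^ dstar)
            / (2 ^ dstar - 1) := by
        rw [Finset.sum_congr rfl (fun j _ => hterm j), ← Finset.sum_div,
          Finset.sum_range_sub' (fun j => (2 * (ε₀ / c) / 2 ^ j) ^ dstar)]
      have hA1 : 1 ≤ (2 * (ε₀ / c) / 2 ^ (J + 1)) ^ dstar := by
        refine Real.one_le_rpow ?_ hds0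
        rw [le_div_iff₀ (by positivity), pow_succ]
        nlinarith [hJ1]
      have hA0 : (2 * (ε₀ / c) / 2 ^ 0) ^ dstar = (18 / 7 : ℝ) ^ dstar * (ε₀ / ε) ^ dstar := by
        rw [pow_zero, div_one, ← Real.mul_rpow (by norm_num) (by positivity)]
        congr 1
        rw [hcdef]; field_simp; ring
      rw [htel, hA0]
      have h12 : (18 / 7 : ℝ) ^ dstar * (ε₀ / ε) ^ dstar - (2 * (ε₀ / c) / 2 ^ (J + 1)) ^ dstar
          ≤ (18 / 7 : ℝ) ^ dstar * (ε₀ / ε) ^ dstar - 1 := by linarith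
      exact div_le_div_of_nonneg_right h12 hq1.le
  have hfin : (n : ℝ) ≤ Cstar * F *
      (if dstar = 0 then Real.logb 2 (ε₀ / ε) + Real.logb 2 (18 / 7)
         else ((18 / 7 : ℝ) ^ dstar * (ε₀ / ε) ^ dstar - 1) / (2 ^ dstar - 1)) :=
    le_trans htotal (mul_le_mul_of_nonneg_left hsum (mul_nonneg hC hF0))
  rw [hFdef] at hfin
  linarith
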